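/- Let ξ be the center of an open ball U ⊂ ℝ³ and let x, y ∈ ℝ³ \ closure(U) satisfy (x − ξ)·(y − ξ) ≥ 0. Then there exists a path from x to y in ℝ³ \ closure(U), lying in the half-space {z : (x − ξ)·(z − ξ) ≥ 0}, of length at most √2 · |x − y|. -/

import Mathlib

/-! Put `a = x - ξ`, `b = y - ξ` and `ρ = min ‖a‖ ‖b‖ > r`. As `⟪a, b⟫ ≥ 0`, the segment from `a`
to `b` lies in the half-space `⟪a, ·⟫ ≥ 0` and stays outside the ball of radius `ρ / √2`. Pushing
it radially out onto the sphere of radius `ρ` keeps it in the half-space and off the closed ball of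
radius `r`, and outside the ball of radius `ρ / √2` this push-out is `√2`-Lipschitz, so the resulting
path has length at most `√2 ‖b - a‖ = √2 |x - y|`. -/

open Set Metric AffineMap
open scoped NNReal ENNReal RealInnerProductSpace

section RadialPushout

variable {E : Type*} [NormedAddCommGroup E] [InnerProductSpace ℝ E]

lemma norm_smul_sub_smul_sq (α β : ℝ) (u v : E) :
    ‖α • u - β • v‖ ^ 2 = (α * ‖u‖ - β * ‖v‖) ^ 2 + 2 * (α * β) * (‖u‖ * ‖v‖ - ⟪u, v⟫) := by
  rw [norm_sub_sq_real, real_inner_smul_left, real_inner_smul_right, norm_smul, norm_smul,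
    Real.norm_eq_abs, Real.norm_eq_abs, mul_pow, mul_pow, sq_abs, sq_abs]
  ring

noncomputable def radialPushout (ρ : ℝ) (z : E) : E := (max ‖z‖ ρ / ‖z‖) • z

variable {ρ : ℝ} {z : E}

lemma norm_radialPushout (hz : z ≠ 0) : ‖radialPushout ρ z‖ = max ‖z‖ ρ := by
  have hz' : 0 < ‖z‖ := norm_pos_iff.2 hz
  rw [radialPushout, norm_smul, Real.norm_eq_abs,
    abs_of_nonneg (div_nonneg (hz'.le.trans (le_max_left _ _)) hz'.le), div_mul_cancel₀ _ hz'.ne']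

lemma radialPushout_of_le (h : ρ ≤ ‖z‖) : radialPushout ρ z = z := by
  rcases eq_or_ne z 0 with rfl | hz
  · simp [radialPushout]
  · rw [radialPushout, max_eq_left h, div_self (norm_ne_zero_iff.2 hz), one_smul]

lemma inner_radialPushout_nonneg {w : E} (h : 0 ≤ ⟪w, z⟫) : 0 ≤ ⟪w, radialPushout ρ z⟫ := by
  rw [radialPushout, real_inner_smul_right]
  exact mul_nonneg (div_nonneg ((norm_nonneg z).trans (le_max_left _ _)) (norm_nonneg z)) h

lemma lipschitzOnWith_radialPushout (hρ : 0 < ρ) :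
    LipschitzOnWith (NNReal.sqrt 2) (radialPushout ρ) {z : E | ρ ≤ √2 * ‖z‖} := by
  refine LipschitzOnWith.of_dist_le_mul fun u (hu : ρ ≤ √2 * ‖u‖) v (hv : ρ ≤ √2 * ‖v‖) => ?_
  have h2 : √2 ^ 2 = 2 := Real.sq_sqrt zero_le_two
  have hs : 0 < ‖u‖ := pos_of_mul_pos_right (hρ.trans_le hu) (Real.sqrt_nonneg 2)
  have ht : 0 < ‖v‖ := pos_of_mul_pos_right (hρ.trans_le hv) (Real.sqrt_nonneg 2)
  have hid : ‖u - v‖ ^ 2 = (‖u‖ - ‖v‖) ^ 2 + 2 * (‖u‖ * ‖v‖ - ⟪u, v⟫) := by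
    simpa using norm_smul_sub_smul_sq 1 1 u v
  set s := ‖u‖
  set t := ‖v‖
  set A := max s ρ
  set B := max t ρ
  have hAs : A ≤ √2 * s := max_le (le_mul_of_one_le_left hs.le Real.one_lt_sqrt_two.le) hu
  have hBt : B ≤ √2 * t := max_le (le_mul_of_one_le_left ht.le Real.one_lt_sqrt_two.le) hv
  have hAB : A * B / (s * t) ≤ 2 := by
    rw [div_le_iff₀ (by positivity)]
    calc A * B ≤ (√2 * s) * (√2 * t) := mul_le_mul hAs hBt (by positivity) (by positivity)
      _ = 2 * (s * t) := by rw [mul_mul_mul_comm, ← sq, h2]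
  have hdiff : (A - B) ^ 2 ≤ (s - t) ^ 2 := sq_le_sq.2 (abs_max_sub_max_le_abs s t ρ)
  have hangle : 0 ≤ s * t - ⟪u, v⟫ := sub_nonneg.2 (real_inner_le_norm u v)
  rw [dist_eq_norm, dist_eq_norm, Real.coe_sqrt, NNReal.coe_ofNat]
  refine (abs_le_of_sq_le_sq ?_ (by positivity)).trans' (le_abs_self _)
  -- In `norm_smul_sub_smul_sq` the push-out does not increase the radial term `(s - t) ^ 2`
  -- and multiplies the angular term by `A * B / (s * t) ≤ 2`.
  calc ‖(A / s) • u - (B / t) • v‖ ^ 2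
        = (A - B) ^ 2 + 2 * (A * B / (s * t)) * (s * t - ⟪u, v⟫) := by
        rw [norm_smul_sub_smul_sq, div_mul_cancel₀ _ hs.ne', div_mul_cancel₀ _ ht.ne',
          div_mul_div_comm]
    _ ≤ 2 * ((s - t) ^ 2 + 2 * (s * t - ⟪u, v⟫)) := by
        nlinarith [mul_le_mul_of_nonneg_right hAB hangle, sq_nonneg (s - t)]
    _ = (√2 * ‖u - v‖) ^ 2 := by rw [mul_pow, h2, hid]

end RadialPushout

section Segment

variable {E : Type*} [NormedAddCommGroup E] [InnerProductSpace ℝ E] {a b : E} {t : ℝ}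

lemma inner_lineMap_nonneg (hab : 0 ≤ ⟪a, b⟫) (ht : t ∈ Icc (0 : ℝ) 1) :
    0 ≤ ⟪a, lineMap a b t⟫ := by
  rw [lineMap_apply_module, inner_add_right, real_inner_smul_right, real_inner_smul_right,
    real_inner_self_eq_norm_sq]
  exact add_nonneg (mul_nonneg (sub_nonneg.2 ht.2) (sq_nonneg _)) (mul_nonneg ht.1 hab)

lemma min_norm_le_sqrt_two_mul_norm_lineMap (hab : 0 ≤ ⟪a, b⟫) (ht : t ∈ Icc (0 : ℝ) 1) :
    min ‖a‖ ‖b‖ ≤ √2 * ‖lineMap a b t‖ := by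
  refine abs_le_of_sq_le_sq ?_ (by positivity) |>.trans' (le_abs_self _)
  have hexp : ‖lineMap a b t‖ ^ 2
      = (1 - t) ^ 2 * ‖a‖ ^ 2 + 2 * ((1 - t) * t) * ⟪a, b⟫ + t ^ 2 * ‖b‖ ^ 2 := by
    rw [lineMap_apply_module, norm_add_sq_real, norm_smul, norm_smul, real_inner_smul_left,
      real_inner_smul_right, Real.norm_eq_abs, Real.norm_eq_abs, mul_pow, mul_pow, sq_abs, sq_abs]
    ring
  have hmin_a : min ‖a‖ ‖b‖ ^ 2 ≤ ‖a‖ ^ 2 := pow_le_pow_left₀ (by positivity) (min_le_left _ _) 2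
  have hmin_b : min ‖a‖ ‖b‖ ^ 2 ≤ ‖b‖ ^ 2 := pow_le_pow_left₀ (by positivity) (min_le_right _ _) 2
  rw [mul_pow, Real.sq_sqrt zero_le_two, hexp]
  -- `2 * ((1 - t) ^ 2 + t ^ 2) = 1 + (2 * t - 1) ^ 2`
  nlinarith [mul_nonneg (mul_nonneg (sub_nonneg.2 ht.2) ht.1) hab,
    mul_le_mul_of_nonneg_left hmin_a (sq_nonneg (1 - t)), mul_le_mul_of_nonneg_left hmin_b (sq_nonneg t),
    mul_nonneg (sq_nonneg (2 * t - 1)) (sq_nonneg (min ‖a‖ ‖b‖))]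

end Segment

lemma LipschitzOnWith.eVariationOn_Icc_le {E : Type*} [PseudoEMetricSpace E] {f : ℝ → E}
    {C : ℝ≥0} {a b : ℝ} (hf : LipschitzOnWith C f (Icc a b)) :
    eVariationOn f (Icc a b) ≤ C * ENNReal.ofReal (b - a) := by
  simpa using hf.comp_eVariationOn_le (mapsTo_id _)

/-- If `x, y` lie outside the closed ball `closure (ball ξ r)` and `(x−ξ)·(y−ξ) ≥ 0`, there is a
path from `x` to `y` avoiding the closed ball, lying in the half-space
`{z : (x−ξ)·(z−ξ) ≥ 0}`, of length at most `√2 · |x − y|`. -/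
theorem stmt2 (ξ : EuclideanSpace ℝ (Fin 3)) (r : ℝ) (hr : 0 < r)
    (x y : EuclideanSpace ℝ (Fin 3))
    (hx : x ∉ closure (Metric.ball ξ r)) (hy : y ∉ closure (Metric.ball ξ r))
    (hxy : 0 ≤ @inner ℝ _ _ (x - ξ) (y - ξ)) :
    ∃ γ : ℝ → EuclideanSpace ℝ (Fin 3), ContinuousOn γ (Set.Icc 0 1) ∧
      γ 0 = x ∧ γ 1 = y ∧
      (∀ t ∈ Set.Icc (0:ℝ) 1, γ t ∉ closure (Metric.ball ξ r) ∧
        0 ≤ @inner ℝ _ _ (x - ξ) (γ t - ξ)) ∧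
      eVariationOn γ (Set.Icc 0 1) ≤ ENNReal.ofReal (Real.sqrt 2 * dist x y) := by
  rw [closure_ball ξ hr.ne'] at hx hy ⊢
  set a := x - ξ
  set b := y - ξ
  set ρ := min ‖a‖ ‖b‖
  have hrρ : r < ρ := lt_min (by simpa [dist_eq_norm] using hx) (by simpa [dist_eq_norm] using hy)
  have hseg : MapsTo (lineMap a b) (Icc (0 : ℝ) 1) {z | ρ ≤ √2 * ‖z‖} := fun t ht =>
    min_norm_le_sqrt_two_mul_norm_lineMap hxy ht
  set γ : ℝ → EuclideanSpace ℝ (Fin 3) := fun t => ξ + radialPushout ρ (lineMap a b t)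
  have hlip : LipschitzOnWith (NNReal.sqrt 2 * nndist x y) γ (Icc 0 1) := by
    have hpush := (lipschitzOnWith_radialPushout (hr.trans hrρ)).comp
      (lipschitzWith_lineMap a b).lipschitzOnWith hseg
    rw [nndist_sub_right] at hpush
    exact fun s hs t ht => by simpa only [γ, edist_add_left, Function.comp_apply] using hpush hs ht
  refine ⟨γ, hlip.continuousOn, ?_, ?_, fun t ht => ⟨?_, ?_⟩, ?_⟩
  · show ξ + radialPushout ρ (lineMap a b 0) = x
    rw [lineMap_apply_zero, radialPushout_of_le (min_le_left _ _), add_sub_cancel]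
  · show ξ + radialPushout ρ (lineMap a b 1) = y
    rw [lineMap_apply_one, radialPushout_of_le (min_le_right _ _), add_sub_cancel]
  · have hg : lineMap a b t ≠ 0 := norm_pos_iff.1 <|
      pos_of_mul_pos_right ((hr.trans hrρ).trans_le (hseg ht)) (Real.sqrt_nonneg 2)
    rw [mem_closedBall, dist_eq_norm, not_le, add_sub_cancel_left, norm_radialPushout hg]
    exact hrρ.trans_le (le_max_right _ _)
  · simpa [γ] using inner_radialPushout_nonneg (ρ := ρ) (inner_lineMap_nonneg hxy ht)
  · refine hlip.eVariationOn_Icc_le.trans_eq ?_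
    rw [sub_zero, ENNReal.ofReal_one, mul_one, ← ENNReal.ofReal_coe_nnreal, NNReal.coe_mul,
      Real.coe_sqrt, coe_nndist, NNReal.coe_ofNat]
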